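/- arXiv:1008.3545 — 3 statements merged into one kernel-verified Lean document; each statement's English description precedes it below -/
import Mathlib

section
/- For 1 ≤ k < n, the curvature quotient f_{n,k} is strictly elliptic on the positive cone: for every x ∈ Γⁿ and every index i, the partial derivative ∂f_{n,k}/∂x_i (x) is strictly positive. Explicitly, writing l = n-k and y_j = x_j⁻¹, one has ∂_i f_{n,k}(x) = (1/l) c_{n,k} σ_l(y)^{-1/l - 1} y_i² σ_{l-1}(y₁,…,ŷ_i,…,y_n), where the hat denotes omission of the i-th variable. -/
/-- The `k`-th elementary symmetric polynomial in `n` real variables. -/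
def esymm (n k : ℕ) (x : Fin n → ℝ) : ℝ :=
  ∑ s ∈ Finset.univ.powersetCard k, ∏ i ∈ s, x i

/-- The curvature quotient `f_{n,k} = c_{n,k} (σ_n/σ_k)^{1/(n-k)}`,
with `c_{n,k} = C(n,k)^{1/(n-k)}`. -/
noncomputable def fnk (n k : ℕ) (x : Fin n → ℝ) : ℝ :=
  (n.choose k : ℝ) ^ ((1 : ℝ) / ((n : ℝ) - (k : ℝ))) *
    (esymm n n x / esymm n k x) ^ ((1 : ℝ) / ((n : ℝ) - (k : ℝ)))

/-! Since `σ_k(x) = σ_n(x) σ_{n-k}(x⁻¹)`, the quotient is `f_{n,k}(x) = c_{n,k} σ_l(y)^{-1/l}`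
with `l = n - k` and `y = x⁻¹`. As a function of `x_i` alone, `σ_l(y) = a + x_i⁻¹ b` with
`a, b ≥ 0` not depending on `x_i`, and `b = σ_{l-1}(y₁,…,ŷ_i,…,y_n) > 0`; so `σ_l(y)` strictly
decreases in `x_i` and `f_{n,k}` strictly increases, with the stated derivative by the chain rule. -/

open Finset Filter Topology

namespace Finset

variable {α K : Type*}

theorem sum_powersetCard_succ_insert_prod [DecidableEq α] [CommSemiring K] {a : α}
    {s : Finset α} (ha : a ∉ s) (m : ℕ) (f : α → K) :
    ∑ t ∈ (insert a s).powersetCard (m + 1), ∏ j ∈ t, f j =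
      ∑ t ∈ s.powersetCard (m + 1), ∏ j ∈ t, f j +
        f a * ∑ t ∈ s.powersetCard m, ∏ j ∈ t, f j := by
  have hnotin : ∀ t ∈ s.powersetCard m, a ∉ t := fun t ht hat =>
    ha ((mem_powersetCard.1 ht).1 hat)
  rw [powersetCard_succ_insert ha, sum_union, sum_image, mul_sum]
  · exact congrArg _ (sum_congr rfl fun t ht => prod_insert (hnotin t ht))
  · intro t ht u hu htu
    rw [← erase_insert (hnotin t ht), ← erase_insert (hnotin u hu), htu]
  · refine disjoint_right.2 fun t ht hts => ?_
    obtain ⟨u, -, rfl⟩ := mem_image.1 ht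
    exact ha ((mem_powersetCard.1 hts).1 (mem_insert_self a u))

theorem sum_powersetCard_prod_eq_prod_mul_sum_inv [DecidableEq α] [Field K] {u : Finset α}
    {m : ℕ} (hm : m ≤ #u) {f : α → K} (hf : ∀ j ∈ u, f j ≠ 0) :
    ∑ t ∈ u.powersetCard m, ∏ j ∈ t, f j =
      (∏ j ∈ u, f j) * ∑ t ∈ u.powersetCard (#u - m), ∏ j ∈ t, (f j)⁻¹ := by
  have hcompl : ∀ {p q : ℕ} {t : Finset α}, t ∈ u.powersetCard p → p + q = #u →
      u \ t ∈ u.powersetCard q := fun {p q t} ht hpq => by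
    obtain ⟨htu, rfl⟩ := mem_powersetCard.1 ht
    exact mem_powersetCard.2 ⟨sdiff_subset, by rw [card_sdiff_of_subset htu]; omega⟩
  rw [mul_sum]
  refine sum_nbij' (u \ ·) (u \ ·) (fun t ht => hcompl ht (by omega))
    (fun t ht => hcompl ht (by omega))
    (fun t ht => sdiff_sdiff_eq_self (mem_powersetCard.1 ht).1)
    (fun t ht => sdiff_sdiff_eq_self (mem_powersetCard.1 ht).1) fun t ht => ?_
  have hne : ∏ j ∈ u \ t, f j ≠ 0 := prod_ne_zero_iff.2 fun j hj => hf j (mem_sdiff.1 hj).1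
  rw [prod_inv_distrib, ← prod_sdiff (mem_powersetCard.1 ht).1, mul_right_comm, mul_inv_cancel₀ hne, one_mul]

theorem sum_powersetCard_prod_pos [CommSemiring K] [PartialOrder K] [IsStrictOrderedRing K]
    {u : Finset α} {m : ℕ} (hm : m ≤ #u) {f : α → K} (hf : ∀ j ∈ u, 0 < f j) :
    0 < ∑ t ∈ u.powersetCard m, ∏ j ∈ t, f j :=
  sum_pos (fun _ ht => prod_pos fun j hj => hf j ((mem_powersetCard.1 ht).1 hj))
    (powersetCard_nonempty.2 hm)

end Finset

section esymm

variable {n : ℕ}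

theorem esymm_self (x : Fin n → ℝ) : esymm n n x = ∏ j, x j := by
  simpa [esymm] using congrArg (∑ t ∈ ·, ∏ j ∈ t, x j) (powersetCard_self (univ : Finset (Fin n)))

theorem esymm_eq_prod_mul_esymm_inv {k : ℕ} (hk : k ≤ n) {x : Fin n → ℝ} (hx : ∀ j, x j ≠ 0) :
    esymm n k x = (∏ j, x j) * esymm n (n - k) (fun j => (x j)⁻¹) := by
  simpa [esymm] using
    sum_powersetCard_prod_eq_prod_mul_sum_inv (u := univ) (by simpa using hk) fun j _ => hx j

theorem esymm_pos {k : ℕ} (hk : k ≤ n) {x : Fin n → ℝ} (hx : ∀ j, 0 < x j) : 0 < esymm n k x :=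
  sum_powersetCard_prod_pos (by simpa using hk) fun j _ => hx j

theorem esymm_update {m : ℕ} (hm : m ≠ 0) (y : Fin n → ℝ) (i : Fin n) (t : ℝ) :
    esymm n m (Function.update y i t) =
      ∑ u ∈ (univ.erase i).powersetCard m, ∏ j ∈ u, y j +
        t * ∑ u ∈ (univ.erase i).powersetCard (m - 1), ∏ j ∈ u, y j := by
  obtain ⟨m, rfl⟩ := Nat.exists_eq_succ_of_ne_zero hm
  have hprod : ∀ {p : ℕ}, ∑ u ∈ (univ.erase i).powersetCard p, ∏ j ∈ u, Function.update y i t j =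
      ∑ u ∈ (univ.erase i).powersetCard p, ∏ j ∈ u, y j :=
    sum_congr rfl fun u hu => prod_congr rfl fun j hj =>
      Function.update_of_ne (ne_of_mem_erase ((mem_powersetCard.1 hu).1 hj)) _ _
  have hsplit := sum_powersetCard_succ_insert_prod (notMem_erase i univ) m (Function.update y i t)
  rw [insert_erase (mem_univ i)] at hsplit
  rw [esymm, hsplit, hprod, hprod, Function.update_self, Nat.succ_sub_one]

end esymm

theorem fnk_eq_mul_esymm_inv_rpow {n k : ℕ} (hk : k ≤ n) {x : Fin n → ℝ} (hx : ∀ j, 0 < x j) :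
    fnk n k x = (n.choose k : ℝ) ^ ((1 : ℝ) / ((n : ℝ) - (k : ℝ))) *
      esymm n (n - k) (fun j => (x j)⁻¹) ^ (-((1 : ℝ) / ((n : ℝ) - (k : ℝ)))) := by
  have hprod : ∏ j, x j ≠ 0 := prod_ne_zero_iff.2 fun j _ => (hx j).ne'
  have hσ : 0 ≤ esymm n (n - k) (fun j => (x j)⁻¹) :=
    (esymm_pos (Nat.sub_le n k) fun j => inv_pos.2 (hx j)).le
  rw [fnk, esymm_self, esymm_eq_prod_mul_esymm_inv hk fun j => (hx j).ne',
    div_mul_cancel_left₀ hprod, Real.inv_rpow hσ, Real.rpow_neg hσ]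

theorem fnk_update_eq {n k : ℕ} (hkn : k < n) {x : Fin n → ℝ} (hx : ∀ j, 0 < x j) (i : Fin n)
    {s : ℝ} (hs : 0 < s) :
    fnk n k (Function.update x i s) = (n.choose k : ℝ) ^ ((1 : ℝ) / ((n : ℝ) - (k : ℝ))) *
      (∑ u ∈ (univ.erase i).powersetCard (n - k), ∏ j ∈ u, (x j)⁻¹ +
        s⁻¹ * ∑ u ∈ (univ.erase i).powersetCard (n - k - 1), ∏ j ∈ u, (x j)⁻¹) ^
          (-((1 : ℝ) / ((n : ℝ) - (k : ℝ)))) := by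
  have hpos : ∀ j, 0 < Function.update x i s j :=
    (Function.forall_update_iff x fun _ v => 0 < v).2 ⟨hs, fun j _ => hx j⟩
  rw [fnk_eq_mul_esymm_inv_rpow hkn.le hpos, ← Function.comp_def Inv.inv, Function.comp_update,
    esymm_update (by omega)]
  rfl

theorem fnk_strictly_elliptic_general (n k : ℕ) (hkn : k < n)
    (x : Fin n → ℝ) (hx : ∀ i, 0 < x i) (i : Fin n) :
    HasDerivAt (fun s : ℝ => fnk n k (Function.update x i s))
        ((1 / ((n : ℝ) - (k : ℝ))) * (n.choose k : ℝ) ^ ((1 : ℝ) / ((n : ℝ) - (k : ℝ))) *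
          (esymm n (n - k) (fun j => (x j)⁻¹)) ^
            (-((1 : ℝ) / ((n : ℝ) - (k : ℝ))) - 1) *
          ((x i)⁻¹) ^ 2 *
          (∑ s ∈ (Finset.univ.erase i).powersetCard (n - k - 1), ∏ j ∈ s, (x j)⁻¹))
        (x i) ∧
      0 < (1 / ((n : ℝ) - (k : ℝ))) * (n.choose k : ℝ) ^ ((1 : ℝ) / ((n : ℝ) - (k : ℝ))) *
          (esymm n (n - k) (fun j => (x j)⁻¹)) ^
            (-((1 : ℝ) / ((n : ℝ) - (k : ℝ))) - 1) *
          ((x i)⁻¹) ^ 2 *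
          (∑ s ∈ (Finset.univ.erase i).powersetCard (n - k - 1), ∏ j ∈ s, (x j)⁻¹) := by
  set r : ℝ := 1 / ((n : ℝ) - (k : ℝ))
  set σ := esymm n (n - k) (fun j => (x j)⁻¹)
  set a := ∑ s ∈ (univ.erase i).powersetCard (n - k), ∏ j ∈ s, (x j)⁻¹
  set b := ∑ s ∈ (univ.erase i).powersetCard (n - k - 1), ∏ j ∈ s, (x j)⁻¹
  have hσ_split : σ = a + (x i)⁻¹ * b :=
    (congrArg (esymm n (n - k)) (Function.update_eq_self i _)).symm.trans
      (esymm_update (by omega) _ i _)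
  have hσ : 0 < σ := esymm_pos (Nat.sub_le n k) fun j => inv_pos.2 (hx j)
  have hb : 0 < b := sum_powersetCard_prod_pos (by simp; omega) fun j _ => inv_pos.2 (hx j)
  have hr : 0 < r := one_div_pos.2 (sub_pos.2 (by exact_mod_cast hkn))
  have hc : 0 < (n.choose k : ℝ) ^ r :=
    Real.rpow_pos_of_pos (by exact_mod_cast Nat.choose_pos hkn.le) r
  refine ⟨?_, mul_pos (mul_pos (mul_pos (mul_pos hr hc) (Real.rpow_pos_of_pos hσ _))
    (pow_pos (inv_pos.2 (hx i)) 2)) hb⟩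
  have hfnk : (fun s => fnk n k (Function.update x i s)) =ᶠ[𝓝 (x i)]
      fun s => (n.choose k : ℝ) ^ r * (a + s⁻¹ * b) ^ (-r) := by
    filter_upwards [Ioi_mem_nhds (hx i)] with s hs using fnk_update_eq hkn hx i hs
  have hderiv := ((((hasDerivAt_inv (hx i).ne').mul_const b).const_add a).rpow_const
    (p := -r) (Or.inl (hσ_split ▸ hσ.ne'))).const_mul ((n.choose k : ℝ) ^ r)
  rw [← hσ_split] at hderiv
  refine (hderiv.congr_deriv ?_).congr_of_eventuallyEq hfnk
  rw [inv_pow]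
  ring

/-- For `1 ≤ k < n`, the curvature quotient `f_{n,k}` is strictly elliptic on the open
positive cone: writing `l = n - k` and `y_j = x_j⁻¹`, its `i`-th partial derivative equals
`(1/l) c_{n,k} σ_l(y)^{-1/l - 1} y_i² σ_{l-1}(y₁,…,ŷ_i,…,y_n)`, which is strictly positive. -/
theorem fnk_strictly_elliptic (n k : ℕ) (hk1 : 1 ≤ k) (hkn : k < n)
    (x : Fin n → ℝ) (hx : ∀ i, 0 < x i) (i : Fin n) :
    HasDerivAt (fun s : ℝ => fnk n k (Function.update x i s))
        ((1 / ((n : ℝ) - (k : ℝ))) * (n.choose k : ℝ) ^ ((1 : ℝ) / ((n : ℝ) - (k : ℝ))) *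
          (esymm n (n - k) (fun j => (x j)⁻¹)) ^
            (-((1 : ℝ) / ((n : ℝ) - (k : ℝ))) - 1) *
          ((x i)⁻¹) ^ 2 *
          (∑ s ∈ (Finset.univ.erase i).powersetCard (n - k - 1), ∏ j ∈ s, (x j)⁻¹))
        (x i) ∧
      0 < (1 / ((n : ℝ) - (k : ℝ))) * (n.choose k : ℝ) ^ ((1 : ℝ) / ((n : ℝ) - (k : ℝ))) *
          (esymm n (n - k) (fun j => (x j)⁻¹)) ^
            (-((1 : ℝ) / ((n : ℝ) - (k : ℝ))) - 1) *
          ((x i)⁻¹) ^ 2 *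
          (∑ s ∈ (Finset.univ.erase i).powersetCard (n - k - 1), ∏ j ∈ s, (x j)⁻¹) :=
  fnk_strictly_elliptic_general n k hkn x hx i
end

section
/- Let F be a smooth real-valued function on the open cone Γ of positive-definite symmetric n×n real matrices that is O(n)-invariant: F(MᵀAM) = F(A) for all orthogonal M. Then for each A ∈ Γ, the unique symmetric matrix B satisfying DF_A(M) = Tr(BM) for all symmetric M commutes with A: [A,B] = AB - BA = 0. Consequently A and B are simultaneously diagonalizable. -/
open Matrix
attribute [local instance] Matrix.normedAddCommGroup Matrix.normedSpace

lemma posDef_conj' {n : ℕ} {A M : Matrix (Fin n) (Fin n) ℝ} (hA : A.PosDef)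
    (hM : Mᵀ * M = 1) : (Mᵀ * A * M).PosDef := by
  have hMinj : ∀ x : Fin n → ℝ, M *ᵥ x = 0 → x = 0 := by
    intro x hx
    have h : (Mᵀ * M) *ᵥ x = 0 := by rw [← Matrix.mulVec_mulVec, hx, Matrix.mulVec_zero]
    simpa [hM] using h
  refine Matrix.posDef_iff_dotProduct_mulVec.mpr ⟨?_, ?_⟩
  · have h := Matrix.isHermitian_conjTranspose_mul_mul M hA.1
    simpa [Matrix.conjTranspose_eq_transpose_of_trivial] using h
  · intro x hx
    have hx' : M *ᵥ x ≠ 0 := fun h => hx (hMinj x h)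
    have h := hA.dotProduct_mulVec_pos hx'
    simp only [star_trivial] at h ⊢
    rw [Matrix.mul_assoc, ← Matrix.mulVec_mulVec, Matrix.dotProduct_mulVec,
      Matrix.vecMul_transpose, ← Matrix.mulVec_mulVec]
    exact h

lemma posDef_lower_bound' {n : ℕ} {A : Matrix (Fin n) (Fin n) ℝ} (hA : A.PosDef) :
    ∃ c > 0, ∀ x : Fin n → ℝ, c * (x ⬝ᵥ x) ≤ x ⬝ᵥ (A *ᵥ x) := by
  rcases Nat.eq_zero_or_pos n with h0 | hn
  · subst h0
    exact ⟨1, one_pos, fun x => by simp [Subsingleton.elim x 0]⟩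
  haveI : Nonempty (Fin n) := ⟨⟨0, hn⟩⟩
  set f : EuclideanSpace ℝ (Fin n) → ℝ := fun x => (fun i => x i) ⬝ᵥ (A *ᵥ fun i => x i) with hf
  have hcont : Continuous f := by
    have : f = fun x : EuclideanSpace ℝ (Fin n) =>
        ∑ i, (EuclideanSpace.proj i x) * ∑ j, A i j * (EuclideanSpace.proj j x) := by
      funext x; simp [hf, dotProduct, Matrix.mulVec, EuclideanSpace.proj]
    rw [this]
    exact continuous_finset_sum _ fun i _ => ((EuclideanSpace.proj i).continuous.mul
      (continuous_finset_sum _ fun j _ => continuous_const.mul (EuclideanSpace.proj j).continuous))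
  obtain ⟨x₀, hx₀S, hmin⟩ := (isCompact_sphere (0 : EuclideanSpace ℝ (Fin n)) 1).exists_isMinOn
    (NormedSpace.sphere_nonempty.mpr zero_le_one) hcont.continuousOn
  have hx₀norm : ‖x₀‖ = 1 := by simpa using mem_sphere_zero_iff_norm.mp hx₀S
  have hx₀ne : (fun i => x₀ i) ≠ (0 : Fin n → ℝ) := by
    intro h
    have : x₀ = 0 := by ext i; exact congrFun h i
    rw [this] at hx₀norm; simp at hx₀norm
  have hc : 0 < f x₀ := by simpa using hA.dotProduct_mulVec_pos hx₀ne
  refine ⟨f x₀, hc, fun x => ?_⟩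
  rcases eq_or_ne x 0 with rfl | hx
  · simp
  · set X : EuclideanSpace ℝ (Fin n) := (WithLp.equiv 2 (Fin n → ℝ)).symm x with hX
    have happ : ∀ i, X i = x i := fun i => rfl
    have hXne : X ≠ 0 := by
      intro h; apply hx; ext i; have := happ i; rw [h] at this; simpa using this.symm

    have hr : 0 < ‖X‖ := norm_pos_iff.mpr hXne
    set u : EuclideanSpace ℝ (Fin n) := ‖X‖⁻¹ • X with hu
    have huS : u ∈ Metric.sphere (0 : EuclideanSpace ℝ (Fin n)) 1 := by
      simp [hu, norm_smul, abs_of_nonneg (inv_nonneg.mpr hr.le), inv_mul_cancel₀ hr.ne']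
    have hfu : f u = ‖X‖⁻¹ ^ 2 * f X := by
      have : ∀ i, u i = ‖X‖⁻¹ * X i := fun i => rfl
      simp only [hf, this]
      simp [dotProduct, Matrix.mulVec, Finset.mul_sum, Finset.sum_mul]
      exact Finset.sum_congr rfl fun i _ => Finset.sum_congr rfl fun j _ => by ring
    have hmin' : f x₀ ≤ f u := hmin huS
    have hXx : f X = x ⬝ᵥ (A *ᵥ x) := by simp [hf, happ]
    have hnorm : ‖X‖ ^ 2 = x ⬝ᵥ x := by
      rw [EuclideanSpace.norm_eq, Real.sq_sqrt (by positivity)]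
      simp [dotProduct, happ, sq]
    have h1 : f x₀ * ‖X‖ ^ 2 ≤ f X := by
      rw [hfu] at hmin'
      have h2 : 0 < ‖X‖ ^ 2 := by positivity
      calc f x₀ * ‖X‖ ^ 2 ≤ (‖X‖⁻¹ ^ 2 * f X) * ‖X‖ ^ 2 :=
            mul_le_mul_of_nonneg_right hmin' h2.le
        _ = f X := by field_simp
    calc f x₀ * (x ⬝ᵥ x) = f x₀ * ‖X‖ ^ 2 := by rw [hnorm]
      _ ≤ f X := h1
      _ = x ⬝ᵥ (A *ᵥ x) := hXx

lemma line_posDef' {n : ℕ} {A M : Matrix (Fin n) (Fin n) ℝ} (hA : A.PosDef) (hM : M.IsSymm) :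
    ∃ ε > 0, ∀ s : ℝ, |s| < ε → (A + s • M).PosDef := by
  obtain ⟨c, hc, hbound⟩ := posDef_lower_bound' hA
  set K := ∑ i, ∑ j, |M i j| with hK
  have hK0 : 0 ≤ K := Finset.sum_nonneg fun i _ => Finset.sum_nonneg fun j _ => abs_nonneg _
  refine ⟨c / (K + 1), by positivity, fun s hs => ?_⟩
  refine Matrix.posDef_iff_dotProduct_mulVec.mpr ⟨?_, ?_⟩
  · show (A + s • M)ᴴ = A + s • M
    have hMh : Mᴴ = M := by rw [Matrix.conjTranspose_eq_transpose_of_trivial]; exact hM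
    have hAh : Aᴴ = A := hA.1
    rw [Matrix.conjTranspose_add, hAh]
    congr 1
    rw [Matrix.conjTranspose_smul, hMh]
    simp
  · intro x hx
    simp only [star_trivial]
    have hxx : ∀ i, x i * x i ≤ x ⬝ᵥ x :=
      fun i => Finset.single_le_sum (f := fun i => x i * x i)
        (fun j _ => mul_self_nonneg _) (Finset.mem_univ i)
    have hxx0 : 0 < x ⬝ᵥ x := by
      obtain ⟨i, hi⟩ := Function.ne_iff.mp hx
      have hi' : x i ≠ 0 := by simpa using hi
      exact lt_of_lt_of_le (mul_self_pos.mpr hi') (hxx i)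
    have habs : ∀ i j, |x i * (M i j * x j)| ≤ |M i j| * (x ⬝ᵥ x) := by
      intro i j
      have h1 := hxx i; have h2 := hxx j
      have he : |x i * (M i j * x j)| = |M i j| * (|x i| * |x j|) := by
        rw [abs_mul, abs_mul]; ring
      rw [he]
      refine mul_le_mul_of_nonneg_left ?_ (abs_nonneg _)
      nlinarith [abs_nonneg (x i), abs_nonneg (x j), sq_abs (x i), sq_abs (x j),
        sq_nonneg (|x i| - |x j|)]
    have hq : |x ⬝ᵥ (M *ᵥ x)| ≤ K * (x ⬝ᵥ x) := by
      have e1 : x ⬝ᵥ (M *ᵥ x) = ∑ i, ∑ j, x i * (M i j * x j) := by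
        simp [dotProduct, Matrix.mulVec, Finset.mul_sum]
      rw [e1, hK, Finset.sum_mul]
      calc |∑ i, ∑ j, x i * (M i j * x j)| ≤ ∑ i, |∑ j, x i * (M i j * x j)| :=
            Finset.abs_sum_le_sum_abs _ _
        _ ≤ ∑ i, ∑ j, |x i * (M i j * x j)| :=
            Finset.sum_le_sum fun i _ => Finset.abs_sum_le_sum_abs _ _
        _ ≤ ∑ i, ∑ j, |M i j| * (x ⬝ᵥ x) :=
            Finset.sum_le_sum fun i _ => Finset.sum_le_sum fun j _ => habs i j
        _ = ∑ i, (∑ j, |M i j|) * (x ⬝ᵥ x) := by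
            exact Finset.sum_congr rfl fun i _ => (Finset.sum_mul _ _ _).symm
    have e2 : x ⬝ᵥ ((A + s • M) *ᵥ x) = x ⬝ᵥ (A *ᵥ x) + s * (x ⬝ᵥ (M *ᵥ x)) := by
      rw [Matrix.add_mulVec, dotProduct_add, Matrix.smul_mulVec, dotProduct_smul]
      rfl
    rw [e2]
    have h5 : -(|s| * |x ⬝ᵥ (M *ᵥ x)|) ≤ s * (x ⬝ᵥ (M *ᵥ x)) := by
      rw [← abs_mul]; exact neg_abs_le _
    have h6 := hbound x
    have h7 : |s| * |x ⬝ᵥ (M *ᵥ x)| ≤ |s| * (K * (x ⬝ᵥ x)) :=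
      mul_le_mul_of_nonneg_left hq (abs_nonneg s)
    have h8 : |s| * (K + 1) < c := by
      have := (lt_div_iff₀ (by positivity : (0:ℝ) < K + 1)).mp hs
      linarith
    nlinarith [abs_nonneg s, hxx0, mul_le_mul_of_nonneg_right h8.le hxx0.le]

lemma rotation_deriv' {n : ℕ} {F : Matrix (Fin n) (Fin n) ℝ → ℝ}
    {f' : Matrix (Fin n) (Fin n) ℝ →L[ℝ] ℝ} {A : Matrix (Fin n) (Fin n) ℝ} (hA : A.PosDef)
    (hf' : HasFDerivWithinAt F f' {C : Matrix (Fin n) (Fin n) ℝ | C.PosDef} A)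
    (hinv : ∀ M : Matrix (Fin n) (Fin n) ℝ, Mᵀ * M = 1 →
      ∀ A : Matrix (Fin n) (Fin n) ℝ, A.PosDef → F (Mᵀ * A * M) = F A)
    (i j : Fin n) (hij : i ≠ j) :
    f' (A * (single i j (1:ℝ) - single j i 1)
      - (single i j (1:ℝ) - single j i 1) * A) = 0 := by
  set W : Matrix (Fin n) (Fin n) ℝ := single i j 1 - single j i 1 with hW
  set P : Matrix (Fin n) (Fin n) ℝ := single i i 1 + single j j 1 with hP
  have hWt : Wᵀ = -W := by
    rw [hW, Matrix.transpose_sub]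
    ext a b
    simp [Matrix.transpose_apply, Matrix.single, and_comm]
  have hPt : Pᵀ = P := by
    rw [hP, Matrix.transpose_add]
    ext a b
    simp [Matrix.transpose_apply, Matrix.single, and_comm]
  have mul0 : ∀ (a b c d : Fin n), b ≠ c →
      single a b (1:ℝ) * single c d 1 = 0 :=
    fun a b c d h => Matrix.single_mul_single_of_ne 1 a b c h 1
  have mul1 : ∀ (a b d : Fin n),
      single a b (1:ℝ) * single b d 1 = single a d 1 :=
    fun a b d => by simpa using Matrix.single_mul_single_same (1:ℝ) a b d 1
  have hWW : W * W = -P := by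
    rw [hW, hP]
    simp only [sub_mul, mul_sub]
    rw [mul0 i j i j hij.symm, mul0 j i j i hij, mul1 i j i, mul1 j i j]
    abel
  have hWP : W * P = W := by
    rw [hW, hP]
    simp only [sub_mul, mul_add]
    rw [mul0 i j i i hij.symm, mul0 j i j j hij, mul1 i j j, mul1 j i i]
    abel
  have hPW : P * W = W := by
    rw [hW, hP]
    simp only [add_mul, mul_sub]
    rw [mul0 i i j i hij, mul0 j j i j hij.symm, mul1 i i j, mul1 j j i]
    abel
  have hPP : P * P = P := by
    rw [hP]
    simp only [add_mul, mul_add]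
    rw [mul0 i i j j hij, mul0 j j i i hij.symm, mul1 i i i, mul1 j j j]
    abel
  set Mθ : ℝ → Matrix (Fin n) (Fin n) ℝ :=
    fun θ => 1 + Real.sin θ • W + (Real.cos θ - 1) • P with hMθ
  have hMt : ∀ θ, (Mθ θ)ᵀ = 1 + (-Real.sin θ) • W + (Real.cos θ - 1) • P := by
    intro θ
    rw [hMθ]
    simp only [Matrix.transpose_add, Matrix.transpose_smul, Matrix.transpose_one, hWt, hPt,
      smul_neg]
    module
  have key : ∀ a b : ℝ, (1 + (-a) • W + b • P) * (1 + a • W + b • P)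
      = 1 + (a * a + 2 * b + b * b) • P := by
    intro a b
    simp only [add_mul, mul_add, one_mul, mul_one, Matrix.smul_mul, Matrix.mul_smul,
      smul_smul, hWW, hWP, hPW, hPP, smul_neg]
    module
  have horth : ∀ θ, (Mθ θ)ᵀ * Mθ θ = 1 := by
    intro θ
    rw [hMt θ, hMθ]
    rw [key (Real.sin θ) (Real.cos θ - 1)]
    have hcoef : Real.sin θ * Real.sin θ + 2 * (Real.cos θ - 1)
        + (Real.cos θ - 1) * (Real.cos θ - 1) = 0 := by
      nlinarith [Real.sin_sq_add_cos_sq θ]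
    rw [hcoef, zero_smul, add_zero]
  set γ : ℝ → Matrix (Fin n) (Fin n) ℝ :=
    fun θ => A + Real.sin θ • (A * W) + (-Real.sin θ) • (W * A)
      + (Real.cos θ - 1) • (A * P + P * A)
      + (Real.sin θ * (Real.cos θ - 1)) • (P * A * W - W * A * P)
      + (-(Real.sin θ * Real.sin θ)) • (W * A * W)
      + ((Real.cos θ - 1) * (Real.cos θ - 1)) • (P * A * P) with hγ
  have hγeq : ∀ θ, γ θ = (Mθ θ)ᵀ * A * Mθ θ := by
    intro θ
    rw [hγ, hMt θ, hMθ]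
    simp only [add_mul, mul_add, one_mul, mul_one, Matrix.smul_mul, Matrix.mul_smul,
      smul_smul, smul_add, smul_sub]
    module
  have hγpos : ∀ θ, (γ θ).PosDef := fun θ => (hγeq θ) ▸ posDef_conj' hA (horth θ)
  have hγF : (fun θ => F (γ θ)) = fun _ => F A :=
    funext fun θ => by rw [hγeq θ]; exact hinv _ (horth θ) A hA
  have hγ0 : γ 0 = A := by simp [hγ]
  have hsin := Real.hasDerivAt_sin 0
  have hcos := Real.hasDerivAt_cos 0
  have hc2 : HasDerivAt (fun θ => Real.cos θ - 1) (-Real.sin 0) 0 := hcos.sub_const 1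
  have hd : HasDerivAt γ (A * W - W * A) 0 := by
    have h :=
      ((((((hasDerivAt_const (0:ℝ) A).add (hsin.smul_const (A * W))).add
        ((hsin.neg).smul_const (W * A))).add (hc2.smul_const (A * P + P * A))).add
        ((hsin.mul hc2).smul_const (P * A * W - W * A * P))).add
        (((hsin.mul hsin).neg).smul_const (W * A * W))).add
        ((hc2.mul hc2).smul_const (P * A * P))
    refine h.congr_deriv ?_
    simp [Real.cos_zero, Real.sin_zero]
    module
  have hcomp : HasDerivWithinAt (F ∘ γ) (f' (A * W - W * A)) Set.univ 0 :=
    hf'.comp_hasDerivWithinAt_of_eq 0 hd.hasDerivWithinAt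
      (fun θ _ => hγpos θ) hγ0.symm
  have hconst : HasDerivAt (F ∘ γ) 0 0 := by
    have : F ∘ γ = fun _ => F A := hγF
    rw [this]
    exact hasDerivAt_const _ _
  have := hconst.unique (hasDerivWithinAt_univ.mp hcomp)
  exact this.symm

/-- Let `F` be a smooth `O(n)`-invariant function on the open cone of positive-definite
symmetric matrices.  Then for `A` in the cone, the symmetric matrix `B` representing the
derivative of `F` at `A` via `DF_A(M) = Tr(BM)` commutes with `A`; consequently `A` and
`B` are simultaneously diagonalizable. -/
theorem representing_matrix_commutes (n : ℕ) (F : Matrix (Fin n) (Fin n) ℝ → ℝ)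
    (hsmooth : ContDiffOn ℝ (⊤ : ℕ∞) F {C : Matrix (Fin n) (Fin n) ℝ | C.PosDef})
    (hinv : ∀ M : Matrix (Fin n) (Fin n) ℝ, Mᵀ * M = 1 →
      ∀ A : Matrix (Fin n) (Fin n) ℝ, A.PosDef → F (Mᵀ * A * M) = F A)
    (A B : Matrix (Fin n) (Fin n) ℝ) (hA : A.PosDef) (hAs : A.IsSymm) (hBs : B.IsSymm)
    (hB : ∀ M : Matrix (Fin n) (Fin n) ℝ, M.IsSymm →
      HasDerivAt (fun s : ℝ => F (A + s • M)) ((B * M).trace) 0) :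
    A * B = B * A := by
  classical
  set S : Set (Matrix (Fin n) (Fin n) ℝ) := {C | C.PosDef} with hS
  have hdiff : DifferentiableWithinAt ℝ F S A := (hsmooth.differentiableOn (by simp)) A hA
  set f' := fderivWithin ℝ F S A with hf'def
  have hf' : HasFDerivWithinAt F f' S A := hdiff.hasFDerivWithinAt
  -- Claim 1: f' M = trace (B * M) for symmetric M
  have claim1 : ∀ M : Matrix (Fin n) (Fin n) ℝ, M.IsSymm → f' M = (B * M).trace := by
    intro M hMs
    obtain ⟨ε, hε, hline⟩ := line_posDef' hA hMs
    have hσ : HasDerivAt (fun s : ℝ => A + s • M) M 0 := by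
      have h1 : HasDerivAt (fun s : ℝ => s • M) ((1:ℝ) • M) 0 := (hasDerivAt_id (0:ℝ)).smul_const M
      have h2 := h1.const_add A
      rwa [one_smul] at h2
    have hmap : Set.MapsTo (fun s : ℝ => A + s • M) (Set.Ioo (-ε) ε) S :=
      fun s hs => hline s (abs_lt.mpr ⟨hs.1, hs.2⟩)
    have h1 : HasDerivWithinAt ((fun C => F C) ∘ (fun s : ℝ => A + s • M)) (f' M)
        (Set.Ioo (-ε) ε) 0 :=
      hf'.comp_hasDerivWithinAt_of_eq 0 hσ.hasDerivWithinAt hmap (by simp)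
    have h2 : HasDerivWithinAt (fun s : ℝ => F (A + s • M)) ((B * M).trace)
        (Set.Ioo (-ε) ε) 0 := (hB M hMs).hasDerivWithinAt
    have hu : UniqueDiffWithinAt ℝ (Set.Ioo (-ε) ε) 0 :=
      uniqueDiffWithinAt_Ioo ⟨neg_lt_zero.mpr hε, hε⟩
    exact (h1.derivWithin hu).symm.trans (h2.derivWithin hu)
  -- combine with rotation_deriv
  set T : Matrix (Fin n) (Fin n) ℝ := B * A - A * B with hT
  have hTskew : Tᵀ = -T := by
    rw [hT, Matrix.transpose_sub, Matrix.transpose_mul, Matrix.transpose_mul, hAs, hBs]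
    abel
  have key : ∀ i j : Fin n, i ≠ j →
      (T * (single i j (1:ℝ) - single j i 1)).trace = 0 := by
    intro i j hij
    set W : Matrix (Fin n) (Fin n) ℝ := single i j 1 - single j i 1 with hW
    have hWt : Wᵀ = -W := by
      rw [hW, Matrix.transpose_sub]
      ext a b
      simp [Matrix.transpose_apply, Matrix.single, and_comm]
    have hMsym : (A * W - W * A).IsSymm := by
      rw [Matrix.IsSymm, Matrix.transpose_sub, Matrix.transpose_mul, Matrix.transpose_mul,
        hWt, hAs]
      simp [Matrix.neg_mul, Matrix.mul_neg]
      abel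
    have h0 : f' (A * W - W * A) = 0 := rotation_deriv' hA hf' hinv i j hij
    have h1 := claim1 _ hMsym
    rw [h0] at h1
    have h2 : (B * (A * W - W * A)).trace = (T * W).trace := by
      calc (B * (A * W - W * A)).trace
          = (B * A * W).trace - (B * W * A).trace := by
            rw [Matrix.mul_sub, Matrix.trace_sub, ← Matrix.mul_assoc, ← Matrix.mul_assoc]
        _ = (B * A * W).trace - (A * B * W).trace := by rw [Matrix.trace_mul_cycle B W A]
        _ = (T * W).trace := by rw [hT, Matrix.sub_mul, Matrix.trace_sub]
    rw [← h2]
    exact h1.symm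
  -- trace of T * single
  have htr : ∀ (C : Matrix (Fin n) (Fin n) ℝ) (i j : Fin n),
      (C * single i j (1:ℝ)).trace = C j i := by
    intro C i j
    rw [Matrix.trace]
    rw [Finset.sum_eq_single j]
    · simp [Matrix.diag]
    · intro k _ hk
      simpa [Matrix.diag] using Matrix.mul_single_apply_of_ne (1:ℝ) i j k k hk C
    · simp
  have hTzero : T = 0 := by
    ext i j
    rcases eq_or_ne i j with rfl | hij
    · have h := congrFun (congrFun hTskew i) i
      simp only [Matrix.transpose_apply, Matrix.neg_apply] at h
      simp only [Matrix.zero_apply]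
      linarith
    · have h := key i j hij
      rw [Matrix.mul_sub, Matrix.trace_sub, htr, htr] at h
      have hs := congrFun (congrFun hTskew j) i
      simp only [Matrix.transpose_apply, Matrix.neg_apply] at hs
      simp only [Matrix.zero_apply]
      linarith
  have : B * A = A * B := sub_eq_zero.mp hTzero
  exact this.symm
end

section
/- Let f be a symmetric, concave, differentiable function on the open positive cone Γⁿ ⊆ ℝⁿ. If λ ∈ Γⁿ and μᵢ = ∂_i f(λ), then for all indices i ≠ j: λᵢ ≥ λ_j implies μᵢ ≤ μ_j. That is, the gradient entries are anti-monotone relative to the ordering of the coordinates. -/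
/-!
Let `σ` swap `i` and `j`. By symmetry `f (λ ∘ σ) = f λ`, so the first-order concavity inequality
`f (λ ∘ σ) ≤ f λ + Df(λ) (λ ∘ σ - λ)` gives `0 ≤ (λᵢ - λⱼ) (μⱼ - μᵢ)`, which settles `λᵢ > λⱼ`.
If `λᵢ = λⱼ`, then `σ` fixes `λ`, and the chain rule applied to `f ∘ σ = f` near `λ` gives `μᵢ = μⱼ`.
-/

open Set Filter Topology

theorem ConcaveOn.le_add_fderiv {E : Type*} [NormedAddCommGroup E] [NormedSpace ℝ E]
    {s : Set E} {f : E → ℝ} {f' : E →L[ℝ] ℝ} {x y : E} (hf : ConcaveOn ℝ s f)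
    (hx : x ∈ s) (hy : y ∈ s) (hf' : HasFDerivAt f f' x) :
    f y ≤ f x + f' (y - x) := by
  set g := f ∘ AffineMap.lineMap (k := ℝ) x y
  have hg : ConcaveOn ℝ (Icc 0 1) g :=
    (hf.comp_affineMap _).subset (hf.1.mapsTo_lineMap hx hy) (convex_Icc 0 1)
  have hg' : HasDerivAt g (f' (y - x)) 0 := by
    refine HasFDerivAt.comp_hasDerivAt _ ?_ AffineMap.hasDerivAt_lineMap
    simpa using hf'
  have := hg.slope_le_of_hasDerivAt (by simp) (by simp) one_pos hg'
  simp only [g, slope_def_field, Function.comp_apply, AffineMap.lineMap_apply_zero,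
    AffineMap.lineMap_apply_one, sub_zero, div_one] at this
  linarith

theorem fderiv_apply_map_eq_of_invariant {𝕜 E F : Type*} [NontriviallyNormedField 𝕜]
    [NormedAddCommGroup E] [NormedSpace 𝕜 E] [NormedAddCommGroup F] [NormedSpace 𝕜 F]
    {f : E → F} {L : E →L[𝕜] E} {x : E} (hfL : ∀ᶠ y in 𝓝 x, f (L y) = f y) (hLx : L x = x)
    (hf : DifferentiableAt 𝕜 f x) (v : E) :
    fderiv 𝕜 f x (L v) = fderiv 𝕜 f x v := by
  have hfLx : DifferentiableAt 𝕜 f (L x) := by rwa [hLx]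
  calc fderiv 𝕜 f x (L v) = fderiv 𝕜 (f ∘ L) x v := by
        rw [fderiv_comp x hfLx L.differentiableAt, L.fderiv, hLx]; rfl
    _ = fderiv 𝕜 f x v := by rw [EventuallyEq.fderiv_eq (f₁ := f ∘ L) hfL]

theorem isOpen_setOf_forall_pos {ι : Type*} [Finite ι] : IsOpen {x : ι → ℝ | ∀ i, 0 < x i} := by
  simpa [Set.pi, Set.ofPred_forall] using
    isOpen_set_pi (s := fun _ : ι => Ioi (0 : ℝ)) finite_univ (fun _ _ => isOpen_Ioi)

theorem comp_swap_sub_self {ι R : Type*} [DecidableEq ι] [Ring R] (x : ι → R) (i j : ι) :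
    x ∘ Equiv.swap i j - x = (x i - x j) • (Pi.single j 1 - Pi.single i 1) := by
  ext k
  rcases eq_or_ne k i with rfl | hki
  · by_cases hkj : k = j <;> simp [hkj]
  · rcases eq_or_ne k j with rfl | hkj
    · simp [hki]
    · simp [Equiv.swap_apply_of_ne_of_ne hki hkj, hki, hkj]

theorem fderiv_single_eq_of_apply_eq {ι : Type*} [Fintype ι] [DecidableEq ι]
    {f : (ι → ℝ) → ℝ} {x : ι → ℝ} {i j : ι}
    (hsym : ∀ᶠ y in 𝓝 x, f (y ∘ Equiv.swap i j) = f y) (hf : DifferentiableAt ℝ f x)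
    (hij : x i = x j) :
    fderiv ℝ f x (Pi.single i 1) = fderiv ℝ f x (Pi.single j 1) := by
  set L := (LinearMap.funLeft ℝ ℝ (Equiv.swap i j)).toContinuousLinearMap
  have hL : ∀ v, L v = v ∘ Equiv.swap i j := fun _ => rfl
  have hLx : L x = x := funext (Equiv.apply_swap_eq_self hij)
  have hLsingle : L (Pi.single i 1) = Pi.single j 1 := by
    rw [hL, Pi.single_comp_equiv, Equiv.symm_swap, Equiv.swap_apply_left]
  rw [← hLsingle]
  exact (fderiv_apply_map_eq_of_invariant hsym hLx hf _).symm

/-- For a symmetric, concave, differentiable function `f` on the open positive cone, the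
partial derivatives `μᵢ = ∂ᵢf(λ)` are anti-monotone relative to the ordering of the
coordinates: for `i ≠ j`, `λᵢ ≥ λⱼ` implies `μᵢ ≤ μⱼ`. -/
theorem gradient_antimonotone (n : ℕ) (f : (Fin n → ℝ) → ℝ)
    (hsym : ∀ σ : Equiv.Perm (Fin n), ∀ x : Fin n → ℝ, (∀ i, 0 < x i) →
      f (x ∘ σ) = f x)
    (hconc : ConcaveOn ℝ {x : Fin n → ℝ | ∀ i, 0 < x i} f)
    (hdiff : ∀ x : Fin n → ℝ, (∀ i, 0 < x i) → DifferentiableAt ℝ f x)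
    (lam : Fin n → ℝ) (hlam : ∀ i, 0 < lam i) :
    ∀ i j : Fin n, i ≠ j → lam j ≤ lam i →
      fderiv ℝ f lam (Pi.single i 1) ≤ fderiv ℝ f lam (Pi.single j 1) := by
  intro i j _ hji
  rcases hji.eq_or_lt with heq | hlt
  · have hsym_near : ∀ᶠ y in 𝓝 lam, f (y ∘ Equiv.swap i j) = f y :=
      eventually_of_mem (isOpen_setOf_forall_pos.mem_nhds hlam) (hsym _)
    exact (fderiv_single_eq_of_apply_eq hsym_near (hdiff lam hlam) heq.symm).le
  · have key := hconc.le_add_fderiv (y := lam ∘ Equiv.swap i j) hlam (fun k => hlam _)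
      (hdiff lam hlam).hasFDerivAt
    rw [hsym _ lam hlam, comp_swap_sub_self, map_smul, map_sub, smul_eq_mul] at key
    exact sub_nonneg.1 <| (mul_nonneg_iff_of_pos_left (sub_pos.2 hlt)).1 (by linarith)
end
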